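/- For any connected finite graph G, the number of pairs (V₁, C) where V₁ is a vertex cover of G and C is an arbitrary subset of the set of connected components of the induced subgraph G[V₁], is at most 3 · 2^{|V(G)|−1}. -/

import Mathlib

/-!
Colour each vertex by `0` if it lies outside `V₁`, and otherwise by `2` or `1` according to
whether its component of `G[V₁]` belongs to `C` or not. This colouring determines the pair
`(V₁, C)`, and since `V₁` is a vertex cover and edges inside `V₁` stay inside one component,
the colours of adjacent vertices are not both `0` and are equal when both are nonzero.
Each colour is compatible with at most two colours, so, walking a BFS tree from a root, a
compatible colouring is fixed by the root's colour (3 choices) and one bit per other vertex.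
-/

namespace SimpleGraph

variable {V : Type*} {G : SimpleGraph V}

theorem Reachable.exists_adj_dist_lt {r v : V} (h : G.Reachable v r) (hv : v ≠ r) :
    ∃ u, G.Adj u v ∧ G.dist r u < G.dist r v := by
  obtain ⟨w, hw⟩ := h.exists_walk_length_eq_dist
  cases w with
  | nil => exact absurd rfl hv
  | @cons _ u _ hadj tail =>
    refine ⟨u, hadj.symm, ?_⟩
    have h_dist_u : G.dist r u ≤ tail.length := G.dist_comm ▸ dist_le tail
    rw [dist_comm (u := r) (v := v), ← hw, Walk.length_cons]
    omega

theorem Connected.card_hom_le {α : Type*} [Fintype V] [Fintype α] (hG : G.Connected)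
    (R : α → α → Prop) [DecidableRel R] {k : ℕ} (hR : ∀ a, Fintype.card {b // R a b} ≤ k) :
    Nat.card {f : V → α // ∀ u v, G.Adj u v → R (f u) (f v)} ≤
      Fintype.card α * k ^ (Fintype.card V - 1) := by
  classical
  obtain ⟨r⟩ := hG.nonempty
  choose p hp_adj hp_dist using fun v (hv : v ≠ r) => (hG.preconnected v r).exists_adj_dist_lt hv
  have e (a : α) : {b // R a b} ↪ Fin k :=
    (Function.Embedding.nonempty_of_card_le ((hR a).trans (Fintype.card_fin k).ge)).some
  have e_inj {a a' : α} (ha : a = a') {b b' : α} (hb : R a b) (hb' : R a' b')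
      (h : e a ⟨b, hb⟩ = e a' ⟨b', hb'⟩) : b = b' := by
    subst ha
    exact congrArg Subtype.val ((e a).injective h)
  let enc (f : {f : V → α // ∀ u v, G.Adj u v → R (f u) (f v)}) :
      α × ({v // v ≠ r} → Fin k) :=
    (f.1 r, fun v => e (f.1 (p v v.2)) ⟨f.1 v, f.2 _ _ (hp_adj v v.2)⟩)
  have enc_injective : Function.Injective enc := by
    rintro ⟨f, hf⟩ ⟨g, hg⟩ h
    obtain ⟨h_root, h_code⟩ := Prod.ext_iff.mp h
    suffices ∀ n v, G.dist r v = n → f v = g v from Subtype.ext (funext fun v => this _ v rfl)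
    intro n
    induction n using Nat.strong_induction_on with
    | _ n ih =>
      rintro v rfl
      by_cases hv : v = r
      · subst hv
        exact h_root
      · exact e_inj (ih _ (hp_dist v hv) _ rfl) _ _ (congrFun h_code ⟨v, hv⟩)
  calc _ ≤ Nat.card (α × ({v // v ≠ r} → Fin k)) :=
        Nat.card_le_card_of_injective enc enc_injective
    _ = Fintype.card α * k ^ (Fintype.card V - 1) := by
      simp [Nat.card_eq_fintype_card, Fintype.card_subtype_compl]

end SimpleGraph

def CoverColorCompat (a b : Fin 3) : Prop := (a ≠ 0 ∨ b ≠ 0) ∧ (a = 0 ∨ b = 0 ∨ a = b)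

instance : DecidableRel CoverColorCompat := fun a b => by
  unfold CoverColorCompat
  infer_instance

theorem card_coverColorCompat_le (a : Fin 3) : Fintype.card {b // CoverColorCompat a b} ≤ 2 := by
  revert a
  decide

namespace SimpleGraph

variable {V : Type*} {G : SimpleGraph V}

variable (G) in
open Classical in
noncomputable def componentColoring (S : Set V) (C : Set (G.induce S).ConnectedComponent)
    (v : V) : Fin 3 :=
  if h : v ∈ S then if (G.induce S).connectedComponentMk ⟨v, h⟩ ∈ C then 2 else 1 else 0

section componentColoring

variable {S : Set V} {C : Set (G.induce S).ConnectedComponent} {v : V}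

theorem componentColoring_eq_zero_iff : G.componentColoring S C v = 0 ↔ v ∉ S := by
  unfold componentColoring
  split_ifs <;> simp_all

theorem componentColoring_ne_zero_iff : G.componentColoring S C v ≠ 0 ↔ v ∈ S := by
  rw [ne_eq, componentColoring_eq_zero_iff, not_not]

theorem componentColoring_eq_two_iff (hv : v ∈ S) :
    G.componentColoring S C v = 2 ↔ (G.induce S).connectedComponentMk ⟨v, hv⟩ ∈ C := by
  unfold componentColoring
  split_ifs <;> simp_all

theorem eq_of_componentColoring_eq {S' : Set V} {C' : Set (G.induce S').ConnectedComponent}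
    (h : G.componentColoring S C = G.componentColoring S' C') : S = S' :=
  Set.ext fun v => by
    rw [← componentColoring_ne_zero_iff (C := C), ← componentColoring_ne_zero_iff (C := C'), h]

theorem componentColoring_injective (S : Set V) : Function.Injective (G.componentColoring S) := by
  intro C C' h
  ext c
  induction c using ConnectedComponent.ind with
  | h w => rw [← componentColoring_eq_two_iff w.2, ← componentColoring_eq_two_iff w.2, h]

theorem coverColorCompat_componentColoring (hS : ∀ u v, G.Adj u v → u ∈ S ∨ v ∈ S) {u v : V}
    (huv : G.Adj u v) :
    CoverColorCompat (G.componentColoring S C u) (G.componentColoring S C v) := by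
  simp only [CoverColorCompat, componentColoring_ne_zero_iff, componentColoring_eq_zero_iff]
  refine ⟨hS u v huv, or_iff_not_imp_left.2 fun hu => or_iff_not_imp_left.2 fun hv => ?_⟩
  rw [not_not] at hu hv
  have h_comp : (G.induce S).connectedComponentMk ⟨u, hu⟩ =
      (G.induce S).connectedComponentMk ⟨v, hv⟩ :=
    ConnectedComponent.sound (Adj.reachable (by simpa using huv))
  rw [componentColoring, componentColoring, dif_pos hu, dif_pos hv, h_comp]

end componentColoring

end SimpleGraph

/-- For any connected finite graph `G`, the number of pairs `(V₁, C)` where `V₁` is a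
vertex cover of `G` and `C` is a subset of the connected components of `G[V₁]` is at
most `3 · 2 ^ (|V| - 1)`. -/
theorem stmt1 {V : Type*} [Fintype V] (G : SimpleGraph V) (hG : G.Connected) :
    Nat.card (Σ V₁ : {S : Set V // ∀ u v : V, G.Adj u v → u ∈ S ∨ v ∈ S},
        Set (G.induce (V₁ : Set V)).ConnectedComponent)
      ≤ 3 * 2 ^ (Fintype.card V - 1) := by
  let coloring (x : Σ V₁ : {S : Set V // ∀ u v : V, G.Adj u v → u ∈ S ∨ v ∈ S},
      Set (G.induce (V₁ : Set V)).ConnectedComponent) :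
      {f : V → Fin 3 // ∀ u v, G.Adj u v → CoverColorCompat (f u) (f v)} :=
    ⟨G.componentColoring x.1 x.2, fun _ _ => SimpleGraph.coverColorCompat_componentColoring x.1.2⟩
  have coloring_injective : Function.Injective coloring := by
    rintro ⟨⟨S, hS⟩, C⟩ ⟨⟨S', hS'⟩, C'⟩ h
    have h_col := congrArg Subtype.val h
    obtain rfl := SimpleGraph.eq_of_componentColoring_eq h_col
    obtain rfl := SimpleGraph.componentColoring_injective S h_col
    rfl
  calc _ ≤ _ := Nat.card_le_card_of_injective coloring coloring_injective
    _ ≤ 3 * 2 ^ (Fintype.card V - 1) := hG.card_hom_le _ card_coverColorCompat_le
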